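/- Let n ≥ 2 and let ξ₀ be the unique real number with det M₁(ξ₀) = 0, where M₁(ξ) is the n×n symmetric matrix with (1,1) entry ξ and all other entries 1/((i + j − 1)(i + j)). Then for every z > ξ₀, the matrix M₁(z) is positive definite. -/

import Mathlib

/-!
Writing `H` for the matrix with every entry `1/((i+j+1)(i+j+2)) = ∫₀¹ t^(i+j) (1-t) dt`, we have
`M₁(ξ) = H + (ξ - 1/2) E₀₀`. The quadratic form of `H` is `∫₀¹ p(t)² (1-t) dt` for the polynomial
`p` with coefficient vector `x`, so `H` is positive definite. Expanding along row `0`,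
`det (H + c E₀₀) = det H · (1 + c α)` with `α = (H⁻¹)₀₀ > 0`, so `ξ₀ = 1/2 - 1/α`. For `z > ξ₀`,
the quadratic form `xᵀ H x + (z - 1/2) x₀²` is positive by the Cauchy–Schwarz bound
`x₀² ≤ α · xᵀ H x` for the inner product `H`.
-/

open Matrix intervalIntegral

namespace Matrix

variable {ι : Type*} [Fintype ι]

theorem PosSemidef.dotProduct_mulVec_sq_le {A : Matrix ι ι ℝ} (hA : A.PosSemidef)
    (x y : ι → ℝ) : (x ⬝ᵥ A *ᵥ y) ^ 2 ≤ (x ⬝ᵥ A *ᵥ x) * (y ⬝ᵥ A *ᵥ y) := by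
  let := A.toSeminormedAddCommGroup hA
  let := A.toInnerProductSpace hA
  have h := real_inner_mul_inner_self_le x y
  change (A *ᵥ y) ⬝ᵥ star x * ((A *ᵥ y) ⬝ᵥ star x)
    ≤ (A *ᵥ x) ⬝ᵥ star x * ((A *ᵥ y) ⬝ᵥ star y) at h
  simpa [sq, dotProduct_comm] using h

variable [DecidableEq ι]

theorem det_add_smul_single {R : Type*} [CommRing R] (A : Matrix ι ι R) (i : ι) (c : R) :
    (A + c • single i i 1).det = A.det + c * A.adjugate i i := by
  have h : A + c • single i i 1 = A.updateRow i (A i + c • Pi.single i 1) := by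
    ext k l
    by_cases hk : k = i
    · subst hk
      by_cases hl : k = l <;> simp [hl]
    · simp [hk, Ne.symm hk]
  rw [h, det_updateRow_add, updateRow_eq_self, det_updateRow_smul, adjugate_apply]

theorem det_add_smul_single_of_det_ne_zero {K : Type*} [Field K] {A : Matrix ι ι K}
    (hA : A.det ≠ 0) (i : ι) (c : K) :
    (A + c • single i i 1).det = A.det * (1 + c * A⁻¹ i i) := by
  rw [det_add_smul_single, inv_def, smul_apply, Ring.inverse_eq_inv', smul_eq_mul]
  field_simp

theorem PosDef.sq_apply_le_inv_apply_mul {A : Matrix ι ι ℝ} (hA : A.PosDef) (x : ι → ℝ)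
    (i : ι) : x i ^ 2 ≤ A⁻¹ i i * (x ⬝ᵥ A *ᵥ x) := by
  have hAinv : A * A⁻¹ = 1 := mul_nonsing_inv A (isUnit_iff_ne_zero.mpr hA.det_pos.ne')
  have hsymm : Aᵀ = A := by simpa using hA.isHermitian.eq
  set v := A⁻¹ *ᵥ Pi.single i 1
  have hAv : A *ᵥ v = Pi.single i 1 := by rw [mulVec_mulVec, hAinv, one_mulVec]
  have hvx : v ⬝ᵥ A *ᵥ x = x i := by
    rw [dotProduct_mulVec, ← hsymm, vecMul_transpose, hAv, single_dotProduct, one_mul]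
  have hvv : v ⬝ᵥ A *ᵥ v = A⁻¹ i i := by
    rw [hAv, dotProduct_single, mul_one]
    simp [v, mulVec_single]
  simpa [hvx, hvv, mul_comm] using hA.posSemidef.dotProduct_mulVec_sq_le v x

theorem dotProduct_add_smul_single_mulVec (A : Matrix ι ι ℝ) (x : ι → ℝ) (i : ι) (c : ℝ) :
    x ⬝ᵥ (A + c • single i i 1) *ᵥ x = x ⬝ᵥ A *ᵥ x + c * x i ^ 2 := by
  rw [add_mulVec, dotProduct_add, smul_mulVec, single_mulVec]
  simp [dotProduct, Function.update_apply]
  ring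

theorem PosDef.add_smul_single {A : Matrix ι ι ℝ} (hA : A.PosDef) (i : ι) {c : ℝ}
    (hc : -1 < c * A⁻¹ i i) : (A + c • single i i 1).PosDef := by
  rw [posDef_iff_dotProduct_mulVec]
  refine ⟨hA.isHermitian.add ?_, fun x hx => ?_⟩
  · rw [smul_single, smul_eq_mul, mul_one, ← diagonal_single]
    exact isHermitian_diagonal _
  have hpos : 0 < x ⬝ᵥ A *ᵥ x := by simpa using hA.dotProduct_mulVec_pos hx
  have hle := hA.sq_apply_le_inv_apply_mul x i
  have hα : 0 < A⁻¹ i i := hA.inv.diag_pos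
  rw [star_trivial, dotProduct_add_smul_single_mulVec]
  rcases le_or_gt 0 c with hc₀ | hc₀
  · positivity
  · nlinarith [mul_le_mul_of_nonpos_left hle hc₀.le]

end Matrix

theorem integral_pow_mul_one_sub (k : ℕ) :
    ∫ t in (0:ℝ)..1, t ^ k * (1 - t) = 1 / (((k + 1 : ℕ) : ℝ) * ((k + 2 : ℕ) : ℝ)) := by
  have h : ∀ t : ℝ, t ^ k * (1 - t) = t ^ k - t ^ (k + 1) := fun t => by ring
  simp only [h]
  rw [integral_sub (intervalIntegrable_pow k) (intervalIntegrable_pow (k + 1)),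
    integral_pow, integral_pow]
  push_cast
  field_simp
  ring

theorem exists_mem_Ioo_sum_mul_pow_ne_zero {n : ℕ} {x : Fin n → ℝ} (hx : x ≠ 0) {a b : ℝ}
    (hab : a < b) : ∃ t ∈ Set.Ioo a b, ∑ i, x i * t ^ (i : ℕ) ≠ 0 := by
  open Polynomial in
  let p : ℝ[X] := ∑ i, C (x i) * X ^ (i : ℕ)
  have hp : p ≠ 0 := by
    obtain ⟨i, hi⟩ := Function.ne_iff.mp hx
    refine ne_of_apply_ne (coeff · i) ?_
    simpa [p, finsetSum_coeff, coeff_C_mul, coeff_X_pow, Fin.val_eq_val] using hi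
  obtain ⟨t, ht, hroot⟩ :=
    ((Set.Ioo_infinite hab).sdiff (finite_setOfPred_isRoot hp)).nonempty
  exact ⟨t, ht, by simpa [p, eval_finsetSum] using hroot⟩

/-- The moments `∫₀¹ t ^ (i + j) (1 - t) dt` of the weight `1 - t`. -/
noncomputable def momentMatrix (n : ℕ) : Matrix (Fin n) (Fin n) ℝ :=
  of fun i j => 1 / (((i + j + 1 : ℕ) : ℝ) * ((i + j + 2 : ℕ) : ℝ))

theorem dotProduct_momentMatrix_mulVec {n : ℕ} (x : Fin n → ℝ) :
    x ⬝ᵥ momentMatrix n *ᵥ x = ∫ t in (0:ℝ)..1, (∑ i, x i * t ^ (i : ℕ)) ^ 2 * (1 - t) := by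
  have h : ∀ t : ℝ, (∑ i, x i * t ^ (i : ℕ)) ^ 2 * (1 - t)
      = ∑ i, ∑ j, x i * x j * (t ^ ((i : ℕ) + j) * (1 - t)) := fun t => by
    rw [sq, Finset.sum_mul_sum, Finset.sum_mul]
    refine Finset.sum_congr rfl fun i _ => ?_
    rw [Finset.sum_mul]
    refine Finset.sum_congr rfl fun j _ => by ring
  simp only [h]
  rw [integral_finsetSum fun i _ => (by fun_prop : Continuous _).intervalIntegrable 0 1]
  simp only [dotProduct, mulVec, momentMatrix, of_apply, Finset.mul_sum]
  refine Finset.sum_congr rfl fun i _ => ?_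
  rw [integral_finsetSum fun j _ => (by fun_prop : Continuous _).intervalIntegrable 0 1]
  refine Finset.sum_congr rfl fun j _ => ?_
  rw [integral_const_mul, integral_pow_mul_one_sub]
  ring

theorem momentMatrix_posDef (n : ℕ) : (momentMatrix n).PosDef := by
  rw [posDef_iff_dotProduct_mulVec]
  refine ⟨?_, fun x hx => ?_⟩
  · ext i j
    simp only [conjTranspose_apply, momentMatrix, of_apply, star_trivial, add_comm (j : ℕ)]
  obtain ⟨t₀, ⟨ht₀, ht₁⟩, hne⟩ := exists_mem_Ioo_sum_mul_pow_ne_zero hx zero_lt_one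
  rw [star_trivial, dotProduct_momentMatrix_mulVec]
  refine integral_pos zero_lt_one (by fun_prop) (fun t ht => ?_) ⟨t₀, ⟨ht₀.le, ht₁.le⟩, ?_⟩
  · have : 0 ≤ 1 - t := by linarith [ht.2]
    positivity
  · have : 0 < 1 - t₀ := by linarith
    positivity

theorem of_ite_eq_momentMatrix_add {n : ℕ} [NeZero n] (ξ : ℝ) :
    (of fun i j : Fin n => if i.val = 0 ∧ j.val = 0 then ξ
      else (1 : ℝ) / (((i.val + j.val + 1 : ℕ) : ℝ) * ((i.val + j.val + 2 : ℕ) : ℝ)))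
      = momentMatrix n + (ξ - 1 / 2) • single 0 0 1 := by
  ext i j
  by_cases h : i = 0 ∧ j = 0
  · obtain ⟨rfl, rfl⟩ := h
    simp [momentMatrix]
  · simp [momentMatrix, Fin.val_eq_zero_iff, h, eq_comm (a := (0 : Fin n))]

theorem stmt12_general (n : ℕ) (hn : 2 ≤ n)
    (M₁ : ℝ → Matrix (Fin n) (Fin n) ℝ)
    (hM₁ : ∀ ξ, M₁ ξ = Matrix.of fun i j : Fin n =>
      if i.val = 0 ∧ j.val = 0 then ξ
      else (1 : ℝ) / (((i.val + j.val + 1 : ℕ) : ℝ) * ((i.val + j.val + 2 : ℕ) : ℝ)))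
    (ξ₀ : ℝ) (hroot : (M₁ ξ₀).det = 0) :
    ∀ z : ℝ, ξ₀ < z → (M₁ z).PosDef := by
  have : NeZero n := ⟨by omega⟩
  intro z hz
  have hH := momentMatrix_posDef n
  have hα : 0 < (momentMatrix n)⁻¹ 0 0 := hH.inv.diag_pos
  have hξ₀ : (ξ₀ - 1 / 2) * (momentMatrix n)⁻¹ 0 0 = -1 := by
    rw [hM₁, of_ite_eq_momentMatrix_add,
      det_add_smul_single_of_det_ne_zero hH.det_pos.ne'] at hroot
    linarith [(mul_eq_zero.mp hroot).resolve_left hH.det_pos.ne']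
  rw [hM₁, of_ite_eq_momentMatrix_add]
  exact hH.add_smul_single 0 (by nlinarith)

/-- If `ξ₀` is the unique real number with `det M₁(ξ₀) = 0`, where `M₁(ξ)` has `(1,1)`
entry `ξ` and other entries `1/((i+j−1)(i+j))`, then `M₁(z)` is positive definite for
every `z > ξ₀`. -/
theorem stmt12 (n : ℕ) (hn : 2 ≤ n)
    (M₁ : ℝ → Matrix (Fin n) (Fin n) ℝ)
    (hM₁ : ∀ ξ, M₁ ξ = Matrix.of fun i j : Fin n =>
      if i.val = 0 ∧ j.val = 0 then ξ
      else (1 : ℝ) / (((i.val + j.val + 1 : ℕ) : ℝ) * ((i.val + j.val + 2 : ℕ) : ℝ)))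
    (ξ₀ : ℝ) (hroot : (M₁ ξ₀).det = 0)
    (huniq : ∀ ξ : ℝ, (M₁ ξ).det = 0 → ξ = ξ₀) :
    ∀ z : ℝ, ξ₀ < z → (M₁ z).PosDef :=
  stmt12_general n hn M₁ hM₁ ξ₀ hroot
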